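/- arXiv:1411.7493 — 2 statements merged into one kernel-verified Lean document; each statement's English description precedes it below -/
import Mathlib

section
/- If w is a leader codeword of a linear code C, then X(D(0)) ∩ (D(w) ∪ X(D(w))) ≠ ∅, i.e., there is a word at Hamming distance 1 from the set of coset leaders which lies in the Voronoi region of w or at Hamming distance 1 from it. -/
open Finset Set

variable {p m n : ℕ} [Fact p.Prime] {K : Type} [Field K] [Fintype K] [DecidableEq K]
  [Algebra (ZMod p) K]

/-- Hamming weight -/
def hw (v : Fin n → K) : ℕ := (Finset.univ.filter fun i => v i ≠ 0).card

/-- Hamming distance -/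
def dH (x y : Fin n → K) : ℕ := hw (x - y)

/-- Hamming distance from a word to a set of words -/
noncomputable def dHSet (A : Set (Fin n → K)) (y : Fin n → K) : ℕ := sInf ((dH y) '' A)

/-- y is a coset leader: minimal Hamming weight in its coset -/
def isCosetLeader (C : Submodule K (Fin n → K)) (y : Fin n → K) : Prop :=
  ∀ c ∈ C, hw y ≤ hw (y + c)

/-- the set of coset leaders -/
def CL (C : Submodule K (Fin n → K)) : Set (Fin n → K) := {y | isCosetLeader C y}

/-- weight of the coset of y -/
noncomputable def cosetWt (C : Submodule K (Fin n → K)) (y : Fin n → K) : ℕ :=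
  sInf (hw '' {z | z - y ∈ C})

/-- minimum distance of the code -/
noncomputable def dmin (C : Submodule K (Fin n → K)) : ℕ :=
  sInf (hw '' {c | c ∈ C ∧ c ≠ 0})

/-- covering radius -/
noncomputable def covRad (C : Submodule K (Fin n → K)) : ℕ :=
  sSup (Set.range fun y => dHSet (C : Set (Fin n → K)) y)

/-- Voronoi region of a codeword -/
def VorD (C : Submodule K (Fin n → K)) (c : Fin n → K) : Set (Fin n → K) :=
  {y | ∀ c' ∈ C, dH y c ≤ dH y c'}

/-- words at Hamming distance exactly one from A -/
def XB (A : Set (Fin n → K)) : Set (Fin n → K) := {y | dHSet A y = 1}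

/-- boundary of a set of words -/
def bdry (A : Set (Fin n → K)) : Set (Fin n → K) := XB A ∪ XB Aᶜ

/-- canonical generator e_{ij} = β^{j-1} e_i -/
def eGen (β : K) (i : Fin n) (j : Fin m) : Fin n → K := Pi.single i (β ^ (j : ℕ))

/-- leader codeword -/
def isLeaderCodeword (C : Submodule K (Fin n → K)) (b : Module.Basis (Fin m) (ZMod p) K)
    (β : K) (w : Fin n → K) : Prop :=
  w ≠ 0 ∧ w ∈ C ∧ ∃ (n₁ n₂ : Fin n → K) (i : Fin n) (j : Fin m),
    w = n₁ + eGen β i j - n₂ ∧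
    (b.repr ((n₁ + eGen β i j) i) j).val = (b.repr (n₁ i) j).val + 1 ∧
    isCosetLeader C n₂ ∧ dHSet (CL C) n₁ ≤ 1 ∧ dHSet (CL C) (n₁ + eGen β i j) ≤ 1

/-- correctable errors: minimal element of each coset w.r.t. the order r -/
def E0 (C : Submodule K (Fin n → K)) (r : (Fin n → K) → (Fin n → K) → Prop) :
    Set (Fin n → K) := {y | ∀ z, z - y ∈ C → z ≠ y → r y z}

/-- uncorrectable errors -/
def E1 (C : Submodule K (Fin n → K)) (r : (Fin n → K) → (Fin n → K) → Prop) :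
    Set (Fin n → K) := (E0 C r)ᶜ

/-- H(y) = { c ∈ C : y - c ≺ y } -/
def Hset (C : Submodule K (Fin n → K)) (r : (Fin n → K) → (Fin n → K) → Prop)
    (y : Fin n → K) : Set (Fin n → K) := {c | c ∈ C ∧ r (y - c) y}

/-- u is a larger half of c -/
def isLargerHalf (r : (Fin n → K) → (Fin n → K) → Prop) (c u : Fin n → K) : Prop :=
  r (u - c) u ∧ ∀ u', r (u' - c) u' → ¬ r u' u

/-- larger halves of elements of T -/
def LH (r : (Fin n → K) → (Fin n → K) → Prop) (T : Set (Fin n → K)) :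
    Set (Fin n → K) := {u | ∃ c ∈ T, isLargerHalf r c u}

/-- x ⊂₁ y : componentwise F_p-coefficient containment with disjoint generalized
supports of x and y - x -/
def subset1 (b : Module.Basis (Fin m) (ZMod p) K) (x y : Fin n → K) : Prop :=
  (∀ (i : Fin n) (j : Fin m), (b.repr (x i) j).val ≤ (b.repr (y i) j).val) ∧
  ∀ (i : Fin n) (j : Fin m), b.repr (x i) j ≠ 0 → b.repr ((y - x) i) j = 0

/-- minimal uncorrectable errors w.r.t. ⊂₁ -/
def M1 (C : Submodule K (Fin n → K)) (r : (Fin n → K) → (Fin n → K) → Prop)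
    (b : Module.Basis (Fin m) (ZMod p) K) : Set (Fin n → K) :=
  {y | y ∈ E1 C r ∧ ∀ x, subset1 b x y → x ∈ E1 C r → x = y}

/-- trial set -/
def isTrialSet (C : Submodule K (Fin n → K)) (r : (Fin n → K) → (Fin n → K) → Prop)
    (T : Set (Fin n → K)) : Prop :=
  T ⊆ (C : Set (Fin n → K)) ∧ (0 : Fin n → K) ∉ T ∧
    ∀ y, y ∈ E0 C r ↔ ∀ c ∈ T, (y = y + c ∨ r y (y + c))

/-!
Write the leader codeword as `w = v - n₂` with `v = n₁ + e_{ij}` and `n₂` a coset leader. Then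
`v - w = n₂` is a coset leader, i.e. `v ∈ D(w)`, and `v` is within distance one of `CL(C)`. If `v`
is not a coset leader it lies in `X(D(0))` and we are done. Otherwise `v` and `v - w` are two
coset leaders of the same coset, so they have equal weight; since `w ≠ 0`, `v` differs from `w` at
some coordinate `i` of the support of `w`, and overwriting `v i` by `w i` gives a neighbour `y` of
`v` that is heavier than `y - w`, hence not a coset leader. Such a `y` lies in `X(D(0))` and, being
adjacent to `v ∈ D(w)`, in `D(w) ∪ X(D(w))`.
-/

open Function

section

omit [Fintype K]

lemma hw_update_add (x : Fin n → K) (i : Fin n) (a : K) :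
    hw (update x i a) + (if x i ≠ 0 then 1 else 0) = hw x + (if a ≠ 0 then 1 else 0) := by
  simp only [hw, Finset.card_filter, ← Finset.sum_erase_add _ _ (Finset.mem_univ i), update_self]
  rw [Finset.sum_congr rfl fun k hk => by rw [update_of_ne (Finset.ne_of_mem_erase hk)]]
  ring

lemma dH_update_le_one (x : Fin n → K) (i : Fin n) (a : K) : dH (update x i a) x ≤ 1 := by
  unfold dH hw
  refine Finset.card_le_one.2 fun k hk l hl => ?_
  have eq_i : ∀ k, (update x i a - x) k ≠ 0 → k = i := fun k hk => by
    by_contra hki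
    simp [update_of_ne hki] at hk
  exact (eq_i k (Finset.mem_filter.1 hk).2).trans (eq_i l (Finset.mem_filter.1 hl).2).symm

lemma hw_eq_hw_sub_add_hw {v w : Fin n → K} (h : ∀ i, w i ≠ 0 → v i = w i) :
    hw v = hw (v - w) + hw w := by
  simp only [hw, Finset.card_filter, ← Finset.sum_add_distrib]
  refine Finset.sum_congr rfl fun k _ => ?_
  by_cases hk : w k = 0
  · simp [hk]
  · simp [h k hk, hk]

lemma dHSet_le_dH {A : Set (Fin n → K)} {a : Fin n → K} (ha : a ∈ A) (y : Fin n → K) :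
    dHSet A y ≤ dH y a :=
  Nat.sInf_le ⟨a, ha, rfl⟩

lemma dHSet_pos {A : Set (Fin n → K)} (hA : A.Nonempty) {y : Fin n → K} (hy : y ∉ A) :
    0 < dHSet A y := by
  obtain ⟨a, ha, hya⟩ := Nat.sInf_mem (hA.image (dH y))
  refine Nat.pos_of_ne_zero fun h => hy ?_
  rw [dHSet, ← hya, dH, hw, ← hammingNorm, hammingNorm_eq_zero, sub_eq_zero] at h
  exact h ▸ ha

lemma mem_XB_of_dHSet_le_one {A : Set (Fin n → K)} (hA : A.Nonempty) {y : Fin n → K}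
    (hy : y ∉ A) (h : dHSet A y ≤ 1) : y ∈ XB A :=
  le_antisymm h (dHSet_pos hA hy)

lemma mem_union_XB_of_dH_le_one {A : Set (Fin n → K)} {a y : Fin n → K} (ha : a ∈ A)
    (h : dH y a ≤ 1) : y ∈ A ∪ XB A := by
  by_cases hy : y ∈ A
  · exact Or.inl hy
  · exact Or.inr (mem_XB_of_dHSet_le_one ⟨a, ha⟩ hy ((dHSet_le_dH ha y).trans h))

lemma zero_mem_CL (C : Submodule K (Fin n → K)) : (0 : Fin n → K) ∈ CL C := fun c _ => by
  simp [hw]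

lemma mem_VorD_iff {C : Submodule K (Fin n → K)} {w y : Fin n → K} (hwC : w ∈ C) :
    y ∈ VorD C w ↔ y - w ∈ CL C := by
  constructor
  · intro h c hc
    have := h (w - c) (sub_mem hwC hc)
    rwa [dH, dH, show y - (w - c) = y - w + c by abel] at this
  · intro h c hc
    have := h (w - c) (sub_mem hwC hc)
    rwa [show y - w + (w - c) = y - c by abel] at this

lemma VorD_zero (C : Submodule K (Fin n → K)) : VorD C 0 = CL C := by
  ext y
  simpa using mem_VorD_iff (y := y) C.zero_mem

lemma exists_dH_le_one_not_mem_CL {C : Submodule K (Fin n → K)} {v w : Fin n → K}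
    (hwC : w ∈ C) (hw0 : w ≠ 0) (hv : v ∈ CL C) (hvw : v - w ∈ CL C) :
    ∃ y, dH y v ≤ 1 ∧ y ∉ CL C := by
  have hw_eq : hw v = hw (v - w) := le_antisymm
    (by simpa [sub_eq_add_neg] using hv (-w) (neg_mem hwC)) (by simpa using hvw w hwC)
  obtain ⟨i, hwi, hvi⟩ : ∃ i, w i ≠ 0 ∧ v i ≠ w i := by
    by_contra! h
    have := hw_eq_hw_sub_add_hw h
    exact hw0 (hammingNorm_eq_zero.1 (by omega : hw w = 0))
  refine ⟨update v i (w i), dH_update_le_one v i (w i), fun hy => ?_⟩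
  have hsub : update v i (w i) - w = update (v - w) i 0 := by
    ext k
    by_cases hk : k = i
    · subst hk; simp
    · simp [update_of_ne hk]
  have hy_le := hy (-w) (neg_mem hwC)
  rw [← sub_eq_add_neg, hsub] at hy_le
  have hy_wt := hw_update_add v i (w i)
  have hyw_wt := hw_update_add (v - w) i 0
  simp only [Pi.sub_apply, ne_eq, sub_eq_zero, hvi, not_false_eq_true, if_true, hwi,
    not_true_eq_false, if_false] at hy_wt hyw_wt
  split_ifs at hy_wt <;> omega

end

theorem stmt9_general (C : Submodule K (Fin n → K)) (b : Module.Basis (Fin m) (ZMod p) K) (β : K)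
    (w : Fin n → K) (hw' : isLeaderCodeword C b β w) :
    (XB (VorD C 0) ∩ (VorD C w ∪ XB (VorD C w))).Nonempty := by
  obtain ⟨hw0, hwC, n₁, n₂, i, j, rfl, -, hn₂, -, hv⟩ := hw'
  set v := n₁ + eGen β i j
  have hvn₂ : v - (v - n₂) = n₂ := sub_sub_cancel v n₂
  have hn₂' : v - (v - n₂) ∈ CL C := by rw [hvn₂]; exact hn₂
  have hvD : v ∈ VorD C (v - n₂) := (mem_VorD_iff hwC).2 hn₂'
  rw [VorD_zero]
  by_cases hvCL : v ∈ CL C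
  · obtain ⟨y, hyv, hy⟩ := exists_dH_le_one_not_mem_CL hwC hw0 hvCL hn₂'
    exact ⟨y, (mem_union_XB_of_dH_le_one hvCL hyv).resolve_left hy,
      mem_union_XB_of_dH_le_one hvD hyv⟩
  · exact ⟨v, mem_XB_of_dHSet_le_one ⟨0, zero_mem_CL C⟩ hvCL hv, Or.inl hvD⟩

theorem stmt9 (C : Submodule K (Fin n → K)) (b : Module.Basis (Fin m) (ZMod p) K) (β : K)
    (hβ : ∀ j : Fin m, b j = β ^ (j : ℕ))
    (w : Fin n → K) (hw' : isLeaderCodeword C b β w) :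
    (XB (VorD C 0) ∩ (VorD C w ∪ XB (VorD C w))).Nonempty :=
  stmt9_general C b β w hw'
end

section
/- Let C be a linear code, ≺ a weight compatible order, and c a nonzero codeword. A larger half of c is a ≺-minimal word u with u − c ≺ u. Every larger half u of c satisfies w_H(c) ≤ 2·w_H(u) ≤ w_H(c) + 2. -/
/-! The triangle inequality gives `w(c) ≤ w(u) + w(u - c) ≤ 2 w(u)`, because `u - c ≺ u` forces
`w(u - c) ≤ w(u)`. Conversely, restricting `c` to `⌊w(c)/2⌋ + 1` positions of its support gives a
word `v` with `v - c ≺ v`, so the minimality of `u` bounds `w(u)` by `w(v) = ⌊w(c)/2⌋ + 1`. -/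

open Finset Set

variable {p m n : ℕ} [Fact p.Prime] {K : Type} [Field K] [Fintype K] [DecidableEq K]
  [Algebra (ZMod p) K]

section Hamming

variable {ι β : Type*} [Fintype ι] [DecidableEq β]

theorem hammingDist_eq_hammingNorm_sub [AddGroup β] (x y : ι → β) :
    hammingDist x y = hammingNorm (x - y) := by
  simp only [hammingDist, hammingNorm, Pi.sub_apply, ne_eq, sub_eq_zero]

theorem hammingNorm_le_add_hammingNorm_sub [AddGroup β] (x y : ι → β) :
    hammingNorm x ≤ hammingNorm y + hammingNorm (y - x) := by
  have := hammingDist_triangle 0 y x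
  rwa [hammingDist_zero_left, hammingDist_eq_hammingNorm_sub] at this

theorem exists_hammingNorm_eq_and_hammingDist_eq [Zero β] (x : ι → β) {k : ℕ}
    (hk : k ≤ hammingNorm x) :
    ∃ y : ι → β, hammingNorm y = k ∧ hammingDist y x = hammingNorm x - k := by
  classical
  obtain ⟨T, hTx, rfl⟩ := Finset.exists_subset_card_eq hk
  refine ⟨T.piecewise x 0, congrArg Finset.card ?_, ?_⟩
  · ext i
    by_cases hi : i ∈ T
    · simp [hi, Finset.mem_filter.mp (hTx hi)]
    · simp [hi]
  · rw [hammingNorm, ← Finset.card_sdiff_of_subset hTx, hammingDist]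
    congr 1
    ext i
    by_cases hi : i ∈ T <;> simp [hi, eq_comm]

end Hamming

omit [Fintype K] in
theorem hw_eq_hammingNorm (v : Fin n → K) : hw v = hammingNorm v := rfl

namespace isLargerHalf

variable {r : (Fin n → K) → (Fin n → K) → Prop} {c u : Fin n → K}

omit [Fintype K] [DecidableEq K] in
theorem ne_zero [Std.Irrefl r] (hu : isLargerHalf r c u) : c ≠ 0 := by
  rintro rfl
  exact irrefl u (by simpa using hu.1)

omit [Fintype K] in
theorem hw_sub_le [Std.Asymm r] (hwt : ∀ x y : Fin n → K, hw x < hw y → r x y)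
    (hu : isLargerHalf r c u) : hw (u - c) ≤ hw u :=
  not_lt.mp fun h => asymm hu.1 (hwt _ _ h)

omit [Fintype K] in
theorem hw_le_of_hw_sub_lt (hwt : ∀ x y : Fin n → K, hw x < hw y → r x y)
    (hu : isLargerHalf r c u) {v : Fin n → K} (hv : hw (v - c) < hw v) : hw u ≤ hw v :=
  not_lt.mp fun h => hu.2 v (hwt _ _ hv) (hwt _ _ h)

end isLargerHalf

theorem stmt15_general (r : (Fin n → K) → (Fin n → K) → Prop)
    (hso : IsStrictTotalOrder (Fin n → K) r)
    (hwt : ∀ x y : Fin n → K, hw x < hw y → r x y)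
    (c u : Fin n → K)
    (hu : isLargerHalf r c u) :
    hw c ≤ 2 * hw u ∧ 2 * hw u ≤ hw c + 2 := by
  have hc : 0 < hw c := hammingNorm_pos_iff.mpr hu.ne_zero
  have hlower : hw c ≤ hw u + hw (u - c) := hammingNorm_le_add_hammingNorm_sub c u
  have hhalf : hw (u - c) ≤ hw u := hu.hw_sub_le hwt
  obtain ⟨v, hv, hvc⟩ := exists_hammingNorm_eq_and_hammingDist_eq c (k := hw c / 2 + 1)
    (by rw [← hw_eq_hammingNorm]; omega)
  rw [hammingDist_eq_hammingNorm_sub] at hvc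
  simp only [← hw_eq_hammingNorm] at hv hvc
  have hupper : hw u ≤ hw v := hu.hw_le_of_hw_sub_lt hwt (by omega)
  omega

/-- weight of a larger half. -/
theorem stmt15 (C : Submodule K (Fin n → K)) (r : (Fin n → K) → (Fin n → K) → Prop)
    (hso : IsStrictTotalOrder (Fin n → K) r)
    (hwt : ∀ x y : Fin n → K, hw x < hw y → r x y)
    (c u : Fin n → K) (hc : c ∈ C) (hc0 : c ≠ 0)
    (hu : isLargerHalf r c u) :
    hw c ≤ 2 * hw u ∧ 2 * hw u ≤ hw c + 2 :=
  stmt15_general r hso hwt c u hu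
end
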